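/- (On-policy gradient decomposition) Suppose each map θ ↦ π_θ(y|x) is Fréchet differentiable at θ₀. Write π = π_{θ₀}, R(x,y) = R^π_β(x,y), R̄(x) = Σ_y π(y|x)·R(x,y), and s(x,y) = D_θ[log π_θ(y|x)](θ₀). Then θ ↦ L(π_θ) (where L(π_θ) = L_{π_θ}(π_θ) with both the sampling distribution and the regularized reward depending on θ) is Fréchet differentiable at θ₀ with derivative equal to −β·Σ_x ρ(x)·Σ_y π(y|x)·(R(x,y) − R̄(x))·s(x,y) + (1/2)·Σ_x ρ(x)·Σ_y π(y|x)·(R(x,y) − R̄(x))²·s(x,y). -/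

import Mathlib

/-!
The loss is `½ Σ_x ρ(x) Var_{π(·|x)}(R^π_β(x,·))`. Differentiating a weighted variance
`Σ_y p_y (f_y - f̄)²` gives `Σ_y (f_y - f̄)² dp_y + 2 p_y (f_y - f̄) (df_y - df̄)`, and the `df̄`
contribution vanishes since `Σ_y p_y (f_y - f̄) = 0` once `Σ_y p_y = 1`. For `p = π_θ` the score
identity gives `dπ = π s`, and `dR = -β s`, which yields the two terms.
-/

open Finset

noncomputable section

/-- The regularized reward `R^π_β(x,y)`. -/
def Rreg {X Y : Type*} (πref r : X → Y → ℝ) (β : ℝ) (π : X → Y → ℝ) (x : X) (y : Y) : ℝ :=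
  r x y - β * Real.log (π x y / πref x y)

/-- Off-policy loss `L_μ(π)`. -/
def Lmu {X Y : Type*} [Fintype X] [Fintype Y] (ρ : X → ℝ) (πref r : X → Y → ℝ) (β : ℝ)
    (μ π : X → Y → ℝ) : ℝ :=
  (1 / 2) * ∑ x, ρ x * ∑ y, μ x y *
    (Rreg πref r β π x y - ∑ y', μ x y' * Rreg πref r β π x y') ^ 2

section WeightedVariance

variable {Y : Type*} [Fintype Y]

def weightedMean (p f : Y → ℝ) : ℝ := ∑ y, p y * f y

def weightedVariance (p f : Y → ℝ) : ℝ := ∑ y, p y * (f y - weightedMean p f) ^ 2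

theorem sum_mul_sub_weightedMean {p : Y → ℝ} (hp : ∑ y, p y = 1) (f : Y → ℝ) :
    ∑ y, p y * (f y - weightedMean p f) = 0 := by
  simp only [mul_sub, sum_sub_distrib, ← sum_mul, hp, one_mul, weightedMean, sub_self]

variable {E : Type*} [NormedAddCommGroup E] [NormedSpace ℝ E]
  {p f : E → Y → ℝ} {p' f' : Y → E →L[ℝ] ℝ} {z : E}

theorem hasFDerivAt_weightedMean (hp : ∀ y, HasFDerivAt (p · y) (p' y) z)
    (hf : ∀ y, HasFDerivAt (f · y) (f' y) z) :
    HasFDerivAt (fun w => weightedMean (p w) (f w)) (∑ y, (p z y • f' y + f z y • p' y)) z :=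
  HasFDerivAt.fun_sum fun y _ => (hp y).mul (hf y)

theorem hasFDerivAt_weightedVariance (hp : ∀ y, HasFDerivAt (p · y) (p' y) z)
    (hf : ∀ y, HasFDerivAt (f · y) (f' y) z) (hsum : ∑ y, p z y = 1) :
    HasFDerivAt (fun w => weightedVariance (p w) (f w))
      (∑ y, ((f z y - weightedMean (p z) (f z)) ^ 2 • p' y
        + (2 * (p z y * (f z y - weightedMean (p z) (f z)))) • f' y)) z := by
  set m := weightedMean (p z) (f z)
  set m' := ∑ y, (p z y • f' y + f z y • p' y)
  have hdev : ∀ y, HasFDerivAt (fun w => f w y - weightedMean (p w) (f w)) (f' y - m') z :=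
    fun y => (hf y).sub (hasFDerivAt_weightedMean hp hf)
  have hterm : ∀ y, HasFDerivAt (fun w => p w y * (f w y - weightedMean (p w) (f w)) ^ 2)
      ((f z y - m) ^ 2 • p' y + (2 * (p z y * (f z y - m))) • f' y
        - (2 * (p z y * (f z y - m))) • m') z := by
    intro y
    refine ((hp y).mul ((hdev y).pow 2)).congr_fderiv ?_
    module
  refine (HasFDerivAt.fun_sum (u := univ) fun y _ => hterm y).congr_fderiv ?_
  rw [sum_sub_distrib, ← sum_smul, ← mul_sum, sum_mul_sub_weightedMean hsum, mul_zero, zero_smul,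
    sub_zero]

end WeightedVariance

theorem Lmu_eq_sum_weightedVariance {X Y : Type*} [Fintype X] [Fintype Y] (ρ : X → ℝ)
    (πref r : X → Y → ℝ) (β : ℝ) (μ π : X → Y → ℝ) :
    Lmu ρ πref r β μ π = 1 / 2 * ∑ x, ρ x * weightedVariance (μ x) (Rreg πref r β π x) :=
  rfl

section Policy

variable {E : Type*} [NormedAddCommGroup E] [NormedSpace ℝ E]

theorem DifferentiableAt.hasFDerivAt_self_smul_fderiv_log {g : E → ℝ} {z : E}
    (hg : DifferentiableAt ℝ g z) (hz : g z ≠ 0) :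
    HasFDerivAt g (g z • fderiv ℝ (fun w => Real.log (g w)) z) z := by
  rw [(hg.hasFDerivAt.log hz).fderiv, smul_smul, mul_inv_cancel₀ hz, one_smul]
  exact hg.hasFDerivAt

theorem hasFDerivAt_Rreg {X Y : Type*} (πref r : X → Y → ℝ) (β : ℝ) {π : E → X → Y → ℝ}
    {θ₀ : E} {x : X} {y : Y} (hπ : DifferentiableAt ℝ (fun θ => π θ x y) θ₀)
    (hπ₀ : π θ₀ x y ≠ 0) (href : πref x y ≠ 0) :
    HasFDerivAt (fun θ => Rreg πref r β (π θ) x y)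
      ((-β) • fderiv ℝ (fun θ => Real.log (π θ x y)) θ₀) θ₀ := by
  have hratio := (hπ.hasFDerivAt.mul_const (πref x y)⁻¹).log (mul_ne_zero hπ₀ (inv_ne_zero href))
  refine ((hratio.const_mul β).const_sub (r x y)).congr_fderiv ?_
  rw [(hπ.hasFDerivAt.log hπ₀).fderiv, smul_smul, smul_smul, smul_smul, ← neg_smul]
  congr 1
  field_simp

end Policy

theorem on_policy_gradient_decomposition_general
    {X Y : Type*} [Fintype X] [Fintype Y]
    {Θ : Type*} [NormedAddCommGroup Θ] [NormedSpace ℝ Θ]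
    (πref : X → Y → ℝ) (href_pos : ∀ x y, 0 < πref x y)
    (r : X → Y → ℝ) (β : ℝ)
    (ρ : X → ℝ)
    (π : Θ → X → Y → ℝ) (hpos : ∀ θ x y, 0 < π θ x y) (hsum : ∀ θ x, ∑ y, π θ x y = 1)
    (θ₀ : Θ) (hdiff : ∀ x y, DifferentiableAt ℝ (fun θ => π θ x y) θ₀) :
    HasFDerivAt (fun θ => Lmu ρ πref r β (π θ) (π θ))
      ((∑ x, ∑ y,
          (-β * (ρ x * (π θ₀ x y *
            (Rreg πref r β (π θ₀) x y - ∑ y', π θ₀ x y' * Rreg πref r β (π θ₀) x y')))) •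
            fderiv ℝ (fun θ => Real.log (π θ x y)) θ₀)
        + (∑ x, ∑ y,
          ((1 / 2) * (ρ x * (π θ₀ x y *
            (Rreg πref r β (π θ₀) x y - ∑ y', π θ₀ x y' * Rreg πref r β (π θ₀) x y') ^ 2))) •
            fderiv ℝ (fun θ => Real.log (π θ x y)) θ₀))
      θ₀ := by
  have hπ x y := (hdiff x y).hasFDerivAt_self_smul_fderiv_log (hpos θ₀ x y).ne'
  have hR x y := hasFDerivAt_Rreg πref r β (hdiff x y) (hpos θ₀ x y).ne' (href_pos x y).ne'
  have hvar x := hasFDerivAt_weightedVariance (hπ x) (hR x) (hsum θ₀ x)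
  simp only [Lmu_eq_sum_weightedVariance]
  have hL := (HasFDerivAt.fun_sum (u := univ) fun x _ => (hvar x).const_mul (ρ x)).const_mul (1 / 2)
  refine hL.congr_fderiv ?_
  simp only [← sum_add_distrib, smul_sum, smul_smul, ← add_smul]
  refine sum_congr rfl fun x _ => sum_congr rfl fun y _ => ?_
  rw [weightedMean]
  congr 1
  ring

/-- on-policy gradient decomposition, pathwise-derivative term plus
likelihood-ratio term. -/
theorem on_policy_gradient_decomposition
    {X Y : Type*} [Fintype X] [Fintype Y] [Nonempty X] [Nonempty Y]
    {Θ : Type*} [NormedAddCommGroup Θ] [NormedSpace ℝ Θ]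
    (πref : X → Y → ℝ) (href_pos : ∀ x y, 0 < πref x y)
    (href_sum : ∀ x, ∑ y, πref x y = 1)
    (r : X → Y → ℝ) (β : ℝ) (hβ : 0 < β)
    (ρ : X → ℝ) (hρ_nonneg : ∀ x, 0 ≤ ρ x) (hρ_sum : ∑ x, ρ x = 1)
    (π : Θ → X → Y → ℝ) (hpos : ∀ θ x y, 0 < π θ x y) (hsum : ∀ θ x, ∑ y, π θ x y = 1)
    (θ₀ : Θ) (hdiff : ∀ x y, DifferentiableAt ℝ (fun θ => π θ x y) θ₀) :
    HasFDerivAt (fun θ => Lmu ρ πref r β (π θ) (π θ))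
      ((∑ x, ∑ y,
          (-β * (ρ x * (π θ₀ x y *
            (Rreg πref r β (π θ₀) x y - ∑ y', π θ₀ x y' * Rreg πref r β (π θ₀) x y')))) •
            fderiv ℝ (fun θ => Real.log (π θ x y)) θ₀)
        + (∑ x, ∑ y,
          ((1 / 2) * (ρ x * (π θ₀ x y *
            (Rreg πref r β (π θ₀) x y - ∑ y', π θ₀ x y' * Rreg πref r β (π θ₀) x y') ^ 2))) •
            fderiv ℝ (fun θ => Real.log (π θ x y)) θ₀))
      θ₀ :=
  on_policy_gradient_decomposition_general πref href_pos r β ρ π hpos hsum θ₀ hdiff
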